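/- arXiv:1711.10569 — 3 statements merged into one kernel-verified Lean document; each statement's English description precedes it below -/
import Mathlib

section
/- Let Ω ⊆ ℝ^d be a compact convex polytope with half-space representation Ω = ⋂_{i=1}^n { x : ⟨a_i, x⟩ ≤ b_i }, fix an index i, and set F = Ω ∩ { x : ⟨a_i, x⟩ = b_i }. For t ∈ ℝ^d let m_i(t) = min{ b_i, b_i + ⟨a_i, t⟩ } and F(t) = (Ω ∩ (Ω + t)) ∩ { x : ⟨a_i, x⟩ = m_i(t) }. Then F(t) converges to F in the Hausdorff metric as t → 0, i.e., the Hausdorff distance between F(t) and F tends to 0 as |t| → 0. -/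
/-!
Since `Ω ∩ (Ω + t)` is the polyhedron with right-hand sides `min (b k) (b k + ⟪a k, t⟫)`,
`F(t)` is a polyhedron whose right-hand side depends continuously on `t`, and `F = F(0)`.
Points of `F(t)` lie in `Ω` with `⟪a i, x⟫` close to `b i`, so by compactness they are close
to `F`. Conversely, a point `y ∈ F` is first moved slightly towards a relative interior point
`q` of `F`; this creates uniform slack in every constraint that is not an implicit equality of
`F`, and the implicit equalities are then repaired by a small correction. Its size is controlled
by a Hoffman-type bound: a feasible system `⟪v k, x⟫ ≤ c k` has a solution of norm `≤ C ‖c‖`,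
because a solution of minimal norm lies in the span of the constraints active at it.
-/

open Filter Topology Metric Set
open scoped InnerProductSpace

variable {ι E : Type*} [NormedAddCommGroup E] [InnerProductSpace ℝ E]

def polyhedron (v : ι → E) (c : ι → ℝ) : Set E := {x | ∀ k, ⟪v k, x⟫_ℝ ≤ c k}

def IsImplicitEquality (v : ι → E) (c : ι → ℝ) (k : ι) : Prop :=
  ∀ x ∈ polyhedron v c, ⟪v k, x⟫_ℝ = c k

theorem isClosed_polyhedron (v : ι → E) (c : ι → ℝ) : IsClosed (polyhedron v c) := by
  simp only [polyhedron, ofPred_forall]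
  exact isClosed_iInter fun k => isClosed_le (by fun_prop) continuous_const

theorem convex_polyhedron (v : ι → E) (c : ι → ℝ) : Convex ℝ (polyhedron v c) := by
  simp only [polyhedron, ofPred_forall]
  exact convex_iInter fun k => convex_halfSpace_le (innerₛₗ ℝ (v k)).isLinear (c k)

theorem polyhedron_inter_setOf_inner_eq (v : ι → E) (c : ι → ℝ) (i : ι) :
    polyhedron v c ∩ {x | ⟪v i, x⟫_ℝ = c i} =
      polyhedron (fun o : Option ι => o.elim (-v i) v) (fun o : Option ι => o.elim (-c i) c) := by
  ext x
  simp only [polyhedron, mem_inter_iff, mem_ofPred_eq, Option.forall, Option.elim, inner_neg_left,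
    neg_le_neg_iff]
  constructor
  · rintro ⟨h, hi⟩
    exact ⟨hi.ge, h⟩
  · rintro ⟨hi, h⟩
    exact ⟨h, (h i).antisymm hi⟩

theorem polyhedron_inter_image_add_right (v : ι → E) (c : ι → ℝ) (t : E) :
    polyhedron v c ∩ (· + t) '' polyhedron v c =
      polyhedron v (fun k => min (c k) (c k + ⟪v k, t⟫_ℝ)) := by
  ext x
  simp only [image_add_right, polyhedron, mem_inter_iff, mem_preimage, mem_ofPred_eq,
    inner_add_right, inner_neg_right, ← forall_and, le_min_iff]
  exact forall_congr' fun k => and_congr_right' (by constructor <;> intro h <;> linarith)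

theorem exists_norm_le_mul_norm_inner_of_mem_span [Fintype ι] (v : ι → E) :
    ∃ C ≥ 0, ∀ x ∈ Submodule.span ℝ (range v), ‖x‖ ≤ C * ‖fun k => ⟪v k, x⟫_ℝ‖ := by
  set W := Submodule.span ℝ (range v)
  have : FiniteDimensional ℝ W := FiniteDimensional.span_of_finite ℝ (finite_range v)
  let T : W →ₗ[ℝ] ι → ℝ := (LinearMap.pi fun k => innerₛₗ ℝ (v k)).domRestrict W
  have hT : LinearMap.ker T = ⊥ := by
    refine (Submodule.eq_bot_iff _).2 fun x hx => ?_
    have hW : W ≤ LinearMap.ker (innerₛₗ ℝ (x : E)) := by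
      refine Submodule.span_le.2 ?_
      rintro _ ⟨k, rfl⟩
      have := congrFun hx k
      simp_all [T, real_inner_comm]
    exact Subtype.ext (inner_self_eq_zero.1 (hW x.2))
  obtain ⟨K, -, hK⟩ := T.exists_antilipschitzWith hT
  exact ⟨K, K.2, fun x hx => ZeroHomClass.bound_of_antilipschitz T hK ⟨x, hx⟩⟩

theorem mem_span_of_isMinOn_norm [Finite ι] {v : ι → E} {c : ι → ℝ} {p : E}
    (hp : p ∈ polyhedron v c) (hmin : IsMinOn norm (polyhedron v c) p) :
    p ∈ Submodule.span ℝ (range fun k : {k // ⟪v k, p⟫_ℝ = c k} => v k) := by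
  set W := Submodule.span ℝ (range fun k : {k // ⟪v k, p⟫_ℝ = c k} => v k)
  have : FiniteDimensional ℝ W := FiniteDimensional.span_of_finite ℝ (finite_range _)
  set r := p - W.starProjection p
  have hr : r ∈ Wᗮ := W.sub_starProjection_mem_orthogonal p
  have hpr : ⟪p, r⟫_ℝ = ‖r‖ ^ 2 := by
    rw [← real_inner_self_eq_norm_sq, ← sub_add_cancel p (W.starProjection p), inner_add_left,
      Submodule.inner_right_of_mem_orthogonal (W.starProjection_apply_mem p) hr, add_zero]
  have hfeas : ∀ᶠ θ in 𝓝 (0 : ℝ), p - θ • r ∈ polyhedron v c := by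
    refine eventually_all.2 fun k => ?_
    by_cases hk : ⟪v k, p⟫_ℝ = c k
    · have hkr : ⟪v k, r⟫_ℝ = 0 := Submodule.inner_right_of_mem_orthogonal
        (Submodule.subset_span (mem_range_self (⟨k, hk⟩ : {k // ⟪v k, p⟫_ℝ = c k}))) hr
      exact Eventually.of_forall fun θ => by simp [inner_sub_right, inner_smul_right, hkr, hk]
    · have hcont : Continuous fun θ : ℝ => ⟪v k, p - θ • r⟫_ℝ := by fun_prop
      exact ((hcont.tendsto' 0 _ (by simp)).eventually
        (eventually_lt_nhds ((hp k).lt_of_ne hk))).mono fun _ => le_of_lt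
  by_contra hpW
  have hr0 : 0 < ‖r‖ := norm_pos_iff.2 fun h => hpW <| by
    rw [sub_eq_zero.1 h]; exact W.starProjection_apply_mem p
  obtain ⟨θ, hθ, hθ0, hθ1⟩ :=
    ((hfeas.filter_mono nhdsWithin_le_nhds).and (Ioo_mem_nhdsGT one_pos)).exists
  have hle : ‖p‖ ^ 2 ≤ ‖p - θ • r‖ ^ 2 :=
    pow_le_pow_left₀ (norm_nonneg _) (isMinOn_iff.1 hmin _ hθ) 2
  rw [norm_sub_sq_real, real_inner_smul_right, hpr, norm_smul, Real.norm_of_nonneg hθ0.le] at hle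
  nlinarith [mul_pos (mul_pos hθ0 (sub_pos.2 hθ1)) (pow_pos hr0 2)]

theorem exists_hoffman_constant [Fintype ι] [FiniteDimensional ℝ E] (v : ι → E) :
    ∃ C ≥ 0, ∀ c, (polyhedron v c).Nonempty → ∃ p ∈ polyhedron v c, ‖p‖ ≤ C * ‖c‖ := by
  classical
  choose K hK0 hK using fun s : Set ι => exists_norm_le_mul_norm_inner_of_mem_span fun k : s => v k
  obtain ⟨C, hC⟩ := Finite.bddAbove_range K
  have hC0 : 0 ≤ C := (hK0 ∅).trans (hC ⟨∅, rfl⟩)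
  refine ⟨C, hC0, fun c hne => ?_⟩
  obtain ⟨p, hp, hpd⟩ := (isClosed_polyhedron v c).exists_infDist_eq_dist hne 0
  have hmin : IsMinOn norm (polyhedron v c) p := fun q hq => by
    simpa [hpd] using infDist_le_dist_of_mem (x := 0) hq
  set A : Set ι := {k | ⟪v k, p⟫_ℝ = c k}
  refine ⟨p, hp, ?_⟩
  calc ‖p‖ ≤ K A * ‖fun k : A => ⟪v k, p⟫_ℝ‖ := hK A p (mem_span_of_isMinOn_norm hp hmin)
    _ ≤ C * ‖c‖ := by
      refine mul_le_mul (hC ⟨A, rfl⟩) ((pi_norm_le_iff_of_nonneg (norm_nonneg c)).2 fun k => ?_)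
        (norm_nonneg _) hC0
      rw [k.2]
      exact norm_le_pi_norm c k

theorem exists_mem_polyhedron_forall_lt [Finite ι] {v : ι → E} {c : ι → ℝ}
    (hne : (polyhedron v c).Nonempty) :
    ∃ q ∈ polyhedron v c, ∀ k, ¬IsImplicitEquality v c k → ⟪v k, q⟫_ℝ < c k := by
  classical
  have := Fintype.ofFinite ι
  suffices ∀ s : Finset ι, ∃ q ∈ polyhedron v c,
      ∀ k ∈ s, ¬IsImplicitEquality v c k → ⟪v k, q⟫_ℝ < c k by
    simpa using this Finset.univ
  intro s
  induction s using Finset.induction_on with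
  | empty => exact ⟨hne.some, hne.some_mem, by simp⟩
  | insert j s _ ih =>
    obtain ⟨q, hq, hqs⟩ := ih
    by_cases hj : IsImplicitEquality v c j
    · exact ⟨q, hq, fun k hk hkj => (Finset.mem_insert.1 hk).elim
        (fun h => absurd (h ▸ hj) hkj) (hqs k · hkj)⟩
    obtain ⟨x, hx, hxj⟩ := not_forall₂.1 hj
    -- the midpoint is strictly feasible wherever `q` or `x` is
    refine ⟨(1 / 2 : ℝ) • q + (1 / 2 : ℝ) • x,
      convex_polyhedron v c hq hx (by norm_num) (by norm_num) (by norm_num), fun k hk hkj => ?_⟩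
    rw [inner_add_right, real_inner_smul_right, real_inner_smul_right]
    rcases Finset.mem_insert.1 hk with rfl | hks
    · linarith [hq k, (hx k).lt_of_ne hxj]
    · linarith [hqs k hks hkj, hx k]

theorem add_smul_sub_add_mem_polyhedron {v : ι → E} {c₀ c : ι → ℝ} {q y p : E} {μ M : ℝ}
    (hμ0 : 0 ≤ μ) (hμ1 : μ ≤ 1) (hq : q ∈ polyhedron v c₀) (hy : y ∈ polyhedron v c₀)
    (hc : ∀ k, c₀ k - M ≤ c k) (himp : ∀ k, IsImplicitEquality v c₀ k → ⟪v k, p⟫_ℝ ≤ c k - c₀ k)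
    (hslack : ∀ k, ¬IsImplicitEquality v c₀ k → ‖v k‖ * ‖p‖ + M ≤ μ * (c₀ k - ⟪v k, q⟫_ℝ)) :
    y + μ • (q - y) + p ∈ polyhedron v c := fun k => by
  have hw : y + μ • (q - y) ∈ polyhedron v c₀ :=
    (convex_polyhedron v c₀).add_smul_sub_mem hy hq ⟨hμ0, hμ1⟩
  rw [inner_add_right]
  by_cases hk : IsImplicitEquality v c₀ k
  · linarith [hk _ hw, himp k hk]
  have hwk : ⟪v k, y + μ • (q - y)⟫_ℝ ≤ c₀ k - μ * (c₀ k - ⟪v k, q⟫_ℝ) := by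
    simp only [inner_add_right, real_inner_smul_right, inner_sub_right]
    nlinarith [hy k]
  linarith [real_inner_le_norm (v k) p, hslack k hk, hc k]

theorem exists_hoffman_constant_implicitEquality [Fintype ι] [FiniteDimensional ℝ E]
    (v : ι → E) (c₀ : ι → ℝ) :
    ∃ C ≥ 0, ∀ c, (polyhedron v c).Nonempty → (polyhedron v c₀).Nonempty →
      ∃ p, (∀ k, IsImplicitEquality v c₀ k → ⟪v k, p⟫_ℝ ≤ c k - c₀ k) ∧ ‖p‖ ≤ C * ‖c - c₀‖ := by
  classical
  obtain ⟨C, hC0, hC⟩ := exists_hoffman_constant fun k : {k // IsImplicitEquality v c₀ k} => v k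
  refine ⟨C, hC0, fun c ⟨x, hx⟩ ⟨w, hw⟩ => ?_⟩
  obtain ⟨p, hp, hpC⟩ := hC (fun k => c k - c₀ k) ⟨x - w, fun k => by
    rw [inner_sub_right, k.2 w hw]; linarith [hx k]⟩
  refine ⟨p, fun k hk => hp ⟨k, hk⟩, hpC.trans (mul_le_mul_of_nonneg_left ?_ hC0)⟩
  exact (pi_norm_le_iff_of_nonneg (norm_nonneg _)).2 fun k => norm_le_pi_norm (c - c₀) k

theorem eventually_forall_infDist_polyhedron_le [Fintype ι] [FiniteDimensional ℝ E] (v : ι → E)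
    {c₀ : ι → ℝ} (hb : Bornology.IsBounded (polyhedron v c₀)) {η : ℝ} (hη : 0 < η) :
    ∀ᶠ c in 𝓝 c₀, (polyhedron v c).Nonempty →
      ∀ y ∈ polyhedron v c₀, infDist y (polyhedron v c) ≤ η := by
  rcases (polyhedron v c₀).eq_empty_or_nonempty with h0 | hne
  · exact Eventually.of_forall fun c _ y hy => by simp [h0] at hy
  obtain ⟨q, hq, hq_lt⟩ := exists_mem_polyhedron_forall_lt hne
  obtain ⟨C, hC0, hC⟩ := exists_hoffman_constant_implicitEquality v c₀
  obtain ⟨D, hD⟩ := hb.subset_closedBall q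
  obtain ⟨μ₀, hμ₀, hμ₀D⟩ := exists_pos_mul_lt (half_pos hη) D
  set μ := min μ₀ 1
  have hμ0 : 0 < μ := lt_min hμ₀ one_pos
  have hμD : μ * D ≤ η / 2 := by
    have hD0 : 0 ≤ D := by simpa using hD hq
    nlinarith [min_le_left μ₀ 1]
  have ht := tendsto_norm_sub_self c₀
  have hsmall : ∀ᶠ c in 𝓝 c₀, C * ‖c - c₀‖ < η / 2 ∧ ∀ k, ¬IsImplicitEquality v c₀ k →
      (1 + ‖v k‖ * C) * ‖c - c₀‖ < μ * (c₀ k - ⟪v k, q⟫_ℝ) := by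
    refine ((ht.const_mul C).eventually_lt_const (by simpa using half_pos hη)).and
      (eventually_all.2 fun k => ?_)
    by_cases hk : IsImplicitEquality v c₀ k
    · exact Eventually.of_forall fun _ h => absurd hk h
    · have hgap := mul_pos hμ0 (sub_pos.2 (hq_lt k hk))
      exact ((ht.const_mul _).eventually_lt_const (by simpa using hgap)).mono fun _ h _ => h
  filter_upwards [hsmall] with c ⟨hCc, hslack⟩ hcne y hy
  obtain ⟨p, hp, hp'⟩ := hC c hcne hne
  have hck (k : ι) : c₀ k - ‖c - c₀‖ ≤ c k := by
    linarith [(abs_le.1 (norm_le_pi_norm (c - c₀) k)).1, Pi.sub_apply c c₀ k]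
  have hz := add_smul_sub_add_mem_polyhedron hμ0.le (min_le_right _ _) hq hy hck hp
    (fun k hk => by nlinarith [hslack k hk, mul_le_mul_of_nonneg_left hp' (norm_nonneg (v k))])
  calc infDist y (polyhedron v c) ≤ ‖μ • (y - q) - p‖ := by
        refine (infDist_le_dist_of_mem hz).trans_eq ?_
        rw [dist_eq_norm]
        congr 1
        module
    _ ≤ μ * D + C * ‖c - c₀‖ := by
        refine (norm_sub_le _ _).trans (add_le_add ?_ hp')
        rw [norm_smul, Real.norm_of_nonneg hμ0.le, ← dist_eq_norm]
        exact mul_le_mul_of_nonneg_left (hD hy) hμ0.le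
    _ ≤ η := by linarith

theorem eventually_forall_infDist_lt_of_isCompact {X : Type*} [PseudoMetricSpace X] {K : Set X}
    (hK : IsCompact K) {f : X → ℝ} (hf : ContinuousOn f K) {β : ℝ} (hfβ : ∀ x ∈ K, f x ≤ β)
    {η : ℝ} (hη : 0 < η) :
    ∀ᶠ s in 𝓝 β, ∀ x ∈ K, s ≤ f x → infDist x (K ∩ {x | f x = β}) < η := by
  set L := K ∩ {x | η ≤ infDist x (K ∩ {x | f x = β})}
  have hL : IsCompact L := hK.inter_right (isClosed_le continuous_const (continuous_infDist_pt _))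
  obtain ⟨m, hmβ, hm⟩ : ∃ m < β, ∀ x ∈ L, f x ≤ m := by
    rcases L.eq_empty_or_nonempty with h | hne
    · exact ⟨β - 1, by linarith, by simp [h]⟩
    obtain ⟨x, hxL, hx⟩ := hL.exists_isMaxOn hne (hf.mono inter_subset_left)
    refine ⟨f x, (hfβ x hxL.1).lt_of_ne fun hxβ => ?_, fun y hy => hx hy⟩
    have := infDist_zero_of_mem (show x ∈ K ∩ {x | f x = β} from ⟨hxL.1, hxβ⟩)
    linarith [hxL.2.out]
  filter_upwards [eventually_gt_nhds hmβ] with s hs x hxK hsx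
  by_contra! h
  linarith [hm x ⟨hxK, h⟩]

theorem tendsto_hausdorffDist_zero {α X : Type*} [PseudoMetricSpace X] {l : Filter α}
    {A : α → Set X} {B : Set X} (h₁ : ∀ η > 0, ∀ᶠ t in l, ∀ x ∈ A t, infDist x B ≤ η)
    (h₂ : ∀ η > 0, ∀ᶠ t in l, (A t).Nonempty → ∀ y ∈ B, infDist y (A t) ≤ η) :
    Tendsto (fun t => hausdorffDist (A t) B) l (𝓝 0) := by
  refine tendsto_order.2 ⟨fun r hr => .of_forall fun t => hr.trans_le hausdorffDist_nonneg,
    fun r hr => ?_⟩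
  filter_upwards [h₁ (r / 2) (half_pos hr), h₂ (r / 2) (half_pos hr)] with t ht₁ ht₂
  rcases (A t).eq_empty_or_nonempty with h | h
  · rwa [h, hausdorffDist_empty']
  · exact (hausdorffDist_le_of_infDist (half_pos hr).le ht₁ (ht₂ h)).trans_lt (half_lt_self hr)

/-- Let `Ω ⊆ ℝ^d` be a compact convex polytope with half-space
representation `Ω = ⋂ i, {x : ⟪a i, x⟫ ≤ b i}`, fix an index `i`, and set
`F = Ω ∩ {x : ⟪a i, x⟫ = b i}`. For `t ∈ ℝ^d` let `m_i(t) = min (b i) (b i + ⟪a i, t⟫)` and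
`F(t) = (Ω ∩ (Ω + t)) ∩ {x : ⟪a i, x⟫ = m_i(t)}`. Then the Hausdorff distance between
`F(t)` and `F` tends to `0` as `t → 0`. -/
theorem facet_hausdorff_convergence (d n : ℕ)
    (a : Fin n → EuclideanSpace ℝ (Fin d)) (b : Fin n → ℝ)
    (Ω : Set (EuclideanSpace ℝ (Fin d)))
    (hΩ : Ω = ⋂ k : Fin n, {x : EuclideanSpace ℝ (Fin d) | ⟪a k, x⟫_ℝ ≤ b k})
    (hcpt : IsCompact Ω)
    (i : Fin n)
    (F : Set (EuclideanSpace ℝ (Fin d)))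
    (hF : F = Ω ∩ {x : EuclideanSpace ℝ (Fin d) | ⟪a i, x⟫_ℝ = b i})
    (Ft : EuclideanSpace ℝ (Fin d) → Set (EuclideanSpace ℝ (Fin d)))
    (hFt : ∀ t, Ft t = (Ω ∩ ((fun x => x + t) '' Ω)) ∩
      {x : EuclideanSpace ℝ (Fin d) | ⟪a i, x⟫_ℝ = min (b i) (b i + ⟪a i, t⟫_ℝ)}) :
    Filter.Tendsto (fun t => Metric.hausdorffDist (Ft t) F) (nhds 0) (nhds 0) := by
  have hΩ' : Ω = polyhedron a b := by rw [hΩ]; ext x; simp [polyhedron]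
  set s : EuclideanSpace ℝ (Fin d) → Fin n → ℝ := fun t k => min (b k) (b k + ⟪a k, t⟫_ℝ)
  have hs : Continuous s := continuous_pi fun k => by fun_prop
  have hFt' : ∀ t, Ft t =
      polyhedron (fun o : Option (Fin n) => o.elim (-a i) a) (fun o => o.elim (-s t i) (s t)) := by
    intro t
    rw [hFt, hΩ', polyhedron_inter_image_add_right]
    exact polyhedron_inter_setOf_inner_eq _ _ i
  have hF0 : F = Ft 0 := by rw [hF, hFt]; simp
  refine tendsto_hausdorffDist_zero (fun η hη => ?_) (fun η hη => ?_)
  · have hlim : Tendsto (fun t => s t i) (𝓝 0) (𝓝 (b i)) := by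
      simpa [s] using tendsto_pi_nhds.1 (hs.tendsto 0) i
    filter_upwards [hlim.eventually (eventually_forall_infDist_lt_of_isCompact hcpt
      (f := fun x => ⟪a i, x⟫_ℝ) (by fun_prop) (fun x hx => by rw [hΩ'] at hx; exact hx i) hη)]
      with t ht x hx
    rw [hFt] at hx
    rw [hF]
    exact (ht x hx.1.1 hx.2.ge).le
  · have hb : Bornology.IsBounded (Ft 0) := hcpt.isBounded.subset (hF0 ▸ hF ▸ inter_subset_left)
    have hlim : Tendsto (fun t o => Option.elim o (-s t i) (s t)) (𝓝 0)
        (𝓝 fun o => Option.elim o (-s 0 i) (s 0)) :=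
      (continuous_pi fun o => by cases o <;> simp only [Option.elim] <;> fun_prop).tendsto 0
    rw [hF0]
    simp_rw [hFt'] at hb ⊢
    exact hlim.eventually (eventually_forall_infDist_polyhedron_le _ hb hη)
end

section
/- Let Ω ⊆ ℝ^d be a compact convex polytope with positive Lebesgue measure that is not centrally symmetric. Then there exists ε > 0 such that for all t ∈ ℝ^d with |t| ≤ ε, the set Ω ∩ (Ω + t) is not centrally symmetric. -/
/-!
Suppose `Ω ∩ (Ω + tₙ)` is symmetric about `cₙ` for translations `tₙ → 0`. Eventually an interior
point `x₀` of `Ω` lies in `Ω ∩ (Ω + tₙ)`, so `cₙ`, the midpoint of `x₀` and its reflection, lies in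
the compact set `Ω`, and a subsequence converges to some `c`. Every interior point of `Ω` likewise
lies in `Ω ∩ (Ω + tₙ)` for large `n`, so its reflection through `c` is a limit of points of the
closed set `Ω`. A convex body is the closure of its interior, hence `Ω` is symmetric about `c`.
-/

open Filter Topology Set MeasureTheory

theorem image_sub_left_eq_image_sub_right_iff {G : Type*} [AddCommGroup G] {A : Set G} {c : G} :
    (fun y => c - y) '' A = (fun y => y - c) '' A ↔ MapsTo (Equiv.pointReflection c) A A := by
  have hrefl (y : G) : Equiv.pointReflection c y = c - y + c := rfl
  constructor
  · intro h x hx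
    obtain ⟨y, hy, hyx⟩ : c - x ∈ (fun y => y - c) '' A := h ▸ mem_image_of_mem _ hx
    rwa [hrefl, ← eq_add_of_sub_eq hyx]
  · intro h
    ext z
    constructor
    · rintro ⟨y, hy, rfl⟩
      exact ⟨c - y + c, hrefl y ▸ h hy, by dsimp only; abel⟩
    · rintro ⟨y, hy, rfl⟩
      exact ⟨c - y + c, hrefl y ▸ h hy, by dsimp only; abel⟩

theorem Convex.interior_nonempty_of_addHaar_pos {E : Type*} [NormedAddCommGroup E]
    [NormedSpace ℝ E] [MeasurableSpace E] [BorelSpace E] [FiniteDimensional ℝ E]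
    (μ : Measure E) [μ.IsAddHaarMeasure] {s : Set E} (hs : Convex ℝ s)
    (hμ : 0 < μ s) : (interior s).Nonempty := by
  by_contra h
  rw [not_nonempty_iff_eq_empty] at h
  have hfrontier : s ⊆ frontier s := by
    rw [frontier, h, sdiff_empty]
    exact subset_closure
  exact hμ.ne' (measure_mono_null hfrontier (hs.addHaar_frontier μ))

theorem Convex.mapsTo_of_mapsTo_interior {E : Type*} [AddCommGroup E] [Module ℝ E]
    [TopologicalSpace E] [IsTopologicalAddGroup E] [ContinuousSMul ℝ E] {s : Set E} {f : E → E}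
    (hs : Convex ℝ s) (hs' : (interior s).Nonempty) (hclosed : IsClosed s) (hf : Continuous f)
    (h : MapsTo f (interior s) s) : MapsTo f s s := by
  intro x hx
  have hx' : x ∈ closure (interior s) :=
    hs.closure_interior_eq_closure_of_nonempty_interior hs' ▸ subset_closure hx
  exact closure_minimal h (hclosed.preimage hf) hx'

theorem eventually_mem_image_add_const {G ι : Type*} [AddGroup G] [TopologicalSpace G]
    [IsTopologicalAddGroup G] {l : Filter ι} {s : Set G} {x : G} {t : ι → G}
    (hx : x ∈ interior s) (ht : Tendsto t l (𝓝 0)) : ∀ᶠ i in l, x ∈ (fun y => y + t i) '' s := by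
  have hlim : Tendsto (fun i => x - t i) l (𝓝 x) := by
    simpa using tendsto_const_nhds.sub ht
  filter_upwards [hlim.eventually (mem_interior_iff_mem_nhds.1 hx)] with i hi
  exact ⟨x - t i, hi, sub_add_cancel x (t i)⟩

theorem exists_mapsTo_pointReflection_of_tendsto {E : Type*} [NormedAddCommGroup E]
    [NormedSpace ℝ E] {Ω : Set E} (hcomp : IsCompact Ω) (hconv : Convex ℝ Ω)
    (hint : (interior Ω).Nonempty) {t c : ℕ → E} (ht : Tendsto t atTop (𝓝 0))
    (hsym : ∀ n, MapsTo (Equiv.pointReflection (c n)) (Ω ∩ (fun y => y + t n) '' Ω) Ω) :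
    ∃ c₀, MapsTo (Equiv.pointReflection c₀) Ω Ω := by
  obtain ⟨x₀, hx₀⟩ := hint
  have hcΩ : ∀ᶠ n in atTop, c n ∈ Ω := by
    filter_upwards [eventually_mem_image_add_const hx₀ ht] with n hn
    rw [← midpoint_pointReflection_right (R := ℝ) (c n) x₀]
    exact hconv.midpoint_mem (interior_subset hx₀) (hsym n ⟨interior_subset hx₀, hn⟩)
  obtain ⟨c₀, -, φ, hφ, hc₀⟩ := hcomp.tendsto_subseq' hcΩ.frequently
  refine ⟨c₀, hconv.mapsTo_of_mapsTo_interior ⟨x₀, hx₀⟩ hcomp.isClosed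
    (Homeomorph.pointReflection c₀).continuous fun x hx => ?_⟩
  have hlim : Tendsto (fun n => Equiv.pointReflection (c (φ n)) x) atTop
      (𝓝 (Equiv.pointReflection c₀ x)) := by
    simpa only [Equiv.pointReflection_apply, vsub_eq_sub, vadd_eq_add, Function.comp_apply]
      using (hc₀.sub tendsto_const_nhds).add hc₀
  refine hcomp.isClosed.mem_of_tendsto hlim ?_
  filter_upwards [eventually_mem_image_add_const hx (ht.comp hφ.tendsto_atTop)] with n hn
  exact hsym (φ n) ⟨interior_subset hx, hn⟩

/-- If `Ω ⊆ ℝ^d` is a compact convex polytope (the convex hull of finitely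
many points) with positive Lebesgue measure that is not centrally symmetric, then there is
`ε > 0` such that `Ω ∩ (Ω + t)` is not centrally symmetric for every `t` with `|t| ≤ ε`. -/
theorem intersection_translate_nonsymmetric (d : ℕ)
    (S : Finset (EuclideanSpace ℝ (Fin d)))
    (Ω : Set (EuclideanSpace ℝ (Fin d)))
    (hΩ : Ω = convexHull ℝ (S : Set (EuclideanSpace ℝ (Fin d))))
    (hvol : 0 < volume Ω)
    (hnonsym : ¬ ∃ c : EuclideanSpace ℝ (Fin d),
      (fun y => c - y) '' Ω = (fun y => y - c) '' Ω) :
    ∃ ε > (0:ℝ), ∀ t : EuclideanSpace ℝ (Fin d), ‖t‖ ≤ ε →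
      ¬ ∃ c : EuclideanSpace ℝ (Fin d),
        (fun y => c - y) '' (Ω ∩ ((fun x => x + t) '' Ω)) =
          (fun y => y - c) '' (Ω ∩ ((fun x => x + t) '' Ω)) := by
  have hconv : Convex ℝ Ω := hΩ ▸ convex_convexHull ℝ _
  have hcomp : IsCompact Ω := hΩ ▸ S.finite_toSet.isCompact_convexHull ℝ
  by_contra! h
  choose t ht c hc using fun n : ℕ => h (1 / (n + 1)) Nat.one_div_pos_of_nat
  have ht0 : Tendsto t atTop (𝓝 0) := squeeze_zero_norm ht tendsto_one_div_add_atTop_nhds_zero_nat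
  obtain ⟨c₀, hc₀⟩ := exists_mapsTo_pointReflection_of_tendsto hcomp hconv
    (hconv.interior_nonempty_of_addHaar_pos volume hvol) ht0
    fun n => (image_sub_left_eq_image_sub_right_iff.1 (hc n)).mono_right inter_subset_left
  exact hnonsym ⟨c₀, image_sub_left_eq_image_sub_right_iff.2 hc₀⟩
end

section
/- Let Ω ⊆ ℝ^d be a compact convex polytope with half-space representation Ω = ⋂_{i=1}^n { x : ⟨a_i, x⟩ ≤ b_i }, fix an index i, set F = Ω ∩ { x : ⟨a_i, x⟩ = b_i }, and for t ∈ ℝ^d set m_i(t) = min{ b_i, b_i + ⟨a_i, t⟩ } and F(t) = (Ω ∩ (Ω + t)) ∩ { x : ⟨a_i, x⟩ = m_i(t) }. Then for every t ∈ ℝ^d, either F(t) ⊆ F or F(t) ⊆ F + t. -/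
open scoped InnerProductSpace

/-- With `Ω = ⋂ k, {x : ⟪a k, x⟫ ≤ b k}` a compact convex polytope,
`F = Ω ∩ {x : ⟪a i, x⟫ = b i}` and
`F(t) = (Ω ∩ (Ω + t)) ∩ {x : ⟪a i, x⟫ = min (b i) (b i + ⟪a i, t⟫)}`,
for every `t` either `F(t) ⊆ F` or `F(t) ⊆ F + t`. -/
theorem facet_translate_subset (d n : ℕ)
    (a : Fin n → EuclideanSpace ℝ (Fin d)) (b : Fin n → ℝ)
    (Ω : Set (EuclideanSpace ℝ (Fin d)))
    (hΩ : Ω = ⋂ k : Fin n, {x : EuclideanSpace ℝ (Fin d) | ⟪a k, x⟫_ℝ ≤ b k})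
    (hcpt : IsCompact Ω)
    (i : Fin n)
    (F : Set (EuclideanSpace ℝ (Fin d)))
    (hF : F = Ω ∩ {x : EuclideanSpace ℝ (Fin d) | ⟪a i, x⟫_ℝ = b i})
    (Ft : EuclideanSpace ℝ (Fin d) → Set (EuclideanSpace ℝ (Fin d)))
    (hFt : ∀ t, Ft t = (Ω ∩ ((fun x => x + t) '' Ω)) ∩
      {x : EuclideanSpace ℝ (Fin d) | ⟪a i, x⟫_ℝ = min (b i) (b i + ⟪a i, t⟫_ℝ)}) :
    ∀ t : EuclideanSpace ℝ (Fin d), Ft t ⊆ F ∨ Ft t ⊆ (fun x => x + t) '' F := by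
  intro t
  rcases le_or_gt 0 ⟪a i, t⟫_ℝ with h | h
  · left
    intro x hx
    rw [hFt] at hx
    obtain ⟨⟨hxΩ, -⟩, hxm⟩ := hx
    rw [hF]
    refine ⟨hxΩ, ?_⟩
    simp only [Set.mem_setOf_eq] at hxm ⊢
    rw [min_eq_left (by linarith)] at hxm
    exact hxm
  · right
    intro x hx
    rw [hFt] at hx
    obtain ⟨⟨-, ⟨y, hyΩ, hyx⟩⟩, hxm⟩ := hx
    simp only [Set.mem_setOf_eq] at hxm
    rw [min_eq_right (by linarith)] at hxm
    refine ⟨y, ?_, hyx⟩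
    rw [hF]
    refine ⟨hyΩ, ?_⟩
    simp only [Set.mem_setOf_eq]
    have : ⟪a i, x⟫_ℝ = ⟪a i, y⟫_ℝ + ⟪a i, t⟫_ℝ := by
      rw [← hyx, inner_add_right]
    linarith
end
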